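/- arXiv:1111.1410 — 2 statements merged into one kernel-verified Lean document; each statement's English description precedes it below -/
import Mathlib

section
/- Let p : Fin 8 → {0,1} be the bits of a plaintext byte p_n = Σ_{i=0}^{7} p(i)·2^i, let w, w̃ : Fin 8 → {1,−1} be the corresponding weight values, and let the ciphertext byte be p'_n = Σ_{i=0}^{7} E(p(i), w(i), w̃(i))·2^i. Then p_n XOR p'_n = Σ_{i=0}^{7} (1 − w'(i))·2^i, where w'(i) = (w(i)+1)/2 and XOR denotes bitwise exclusive-or of natural numbers. In particular, the XOR of a plaintext byte with its ciphertext byte equals a keystream byte η_n that depends only on the weights, not on the plaintext. -/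
/-- The threshold function: `f x = 1` if `x ≥ 0`, `0` otherwise. -/
noncomputable def f (x : ℝ) : ℕ := if 0 ≤ x then 1 else 0

/-- The bit `(w+1)/2` derived from a weight `w ∈ {1, -1}`, as a natural number. -/
noncomputable def wbit (w : ℝ) : ℕ := ⌊(w + 1) / 2⌋.toNat

/-- Encryption of a bit `p` with weights `w, w̃ ∈ {1,-1}`:
`E p w w̃ = f (p·w + c·w̃ - θ)` if `w = 1`, `f (p·w - c·w̃ + θ)` otherwise,
where `c = -w/2` and `θ = ((w+1)/2) XOR ((w̃+1)/2)` (XOR of bits, cast to ℝ). -/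
noncomputable def E (p : ℕ) (w wt : ℝ) : ℕ :=
  if w = 1 then
    f ((p : ℝ) * w + (-w / 2) * wt - ((wbit w ^^^ wbit wt : ℕ) : ℝ))
  else
    f ((p : ℝ) * w - (-w / 2) * wt + ((wbit w ^^^ wbit wt : ℕ) : ℝ))

/-!
Checking the four sign patterns of `(w, w̃)` shows that the encryption of a bit `p` is
`p XOR (1 - w')`, independently of `w̃`. Since XOR of binary expansions is computed digit by
digit, the ciphertext byte is the plaintext byte XOR the keystream byte `Σ (1 - w'(i)) 2^i`, and
XORing with the plaintext again cancels it.
-/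

lemma wbit_one : wbit 1 = 1 := by norm_num [wbit]

lemma wbit_neg_one : wbit (-1) = 0 := by norm_num [wbit]

lemma E_eq_xor_one_sub_wbit {p : ℕ} (hp : p = 0 ∨ p = 1) {w wt : ℝ}
    (hw : w = 1 ∨ w = -1) (hwt : wt = 1 ∨ wt = -1) :
    E p w wt = p ^^^ (1 - wbit w) := by
  rcases hp with rfl | rfl <;> rcases hw with rfl | rfl <;> rcases hwt with rfl | rfl <;>
    norm_num [E, f, wbit_one, wbit_neg_one]

theorem Nat.xor_add_two_mul {a b : ℕ} (ha : a < 2) (hb : b < 2) (m n : ℕ) :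
    (a + 2 * m) ^^^ (b + 2 * n) = (a ^^^ b) + 2 * (m ^^^ n) := by
  have as_bit : ∀ c < 2, ∀ k, c + 2 * k = Nat.bit (c == 1) k := by
    intro c hc k
    interval_cases c <;> simp [Nat.bit_val, add_comm]
  rw [as_bit a ha, as_bit b hb, Nat.xor_bit, as_bit _ (Nat.xor_lt_two_pow (n := 1) ha hb)]
  interval_cases a <;> interval_cases b <;> rfl

theorem Nat.xor_sum_binary {n : ℕ} {a b : Fin n → ℕ} (ha : ∀ i, a i < 2) (hb : ∀ i, b i < 2) :
    (∑ i, a i * 2 ^ (i : ℕ)) ^^^ (∑ i, b i * 2 ^ (i : ℕ)) =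
      ∑ i, (a i ^^^ b i) * 2 ^ (i : ℕ) := by
  induction n with
  | zero => simp
  | succ n ih =>
    have split : ∀ c : Fin (n + 1) → ℕ,
        ∑ i, c i * 2 ^ (i : ℕ) = c 0 + 2 * ∑ i : Fin n, c i.succ * 2 ^ (i : ℕ) := by
      intro c
      simp only [Fin.sum_univ_succ, Fin.val_zero, Fin.val_succ, pow_zero, mul_one, pow_succ,
        Finset.mul_sum]
      congr 1
      exact Finset.sum_congr rfl fun i _ => by ring
    rw [split a, split b, split, Nat.xor_add_two_mul (ha 0) (hb 0),
      ih (fun i => ha i.succ) (fun i => hb i.succ)]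

theorem stmt_8 (p : Fin 8 → ℕ) (hp : ∀ i, p i = 0 ∨ p i = 1)
    (w wt : Fin 8 → ℝ)
    (hw : ∀ i, w i = 1 ∨ w i = -1) (hwt : ∀ i, wt i = 1 ∨ wt i = -1) :
    (∑ i : Fin 8, p i * 2 ^ (i : ℕ)) ^^^
      (∑ i : Fin 8, E (p i) (w i) (wt i) * 2 ^ (i : ℕ)) =
    ∑ i : Fin 8, (1 - wbit (w i)) * 2 ^ (i : ℕ) := by
  have hp_lt : ∀ i, p i < 2 := fun i => by rcases hp i with h | h <;> omega
  have hkey_lt : ∀ i, 1 - wbit (w i) < 2 := fun i => by omega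
  simp only [E_eq_xor_one_sub_wbit (hp _) (hw _) (hwt _)]
  rw [Nat.xor_sum_binary hp_lt fun i => Nat.xor_lt_two_pow (n := 1) (hp_lt i) (hkey_lt i)]
  simp only [Nat.xor_xor_cancel_left]
end

section
/- Let w, w̃ : ℕ → {1,−1} be fixed keystream weight sequences, and let p, q : ℕ → {0,1} be two plaintext bit sequences that differ in exactly one position k₀ (i.e., p(k₀) ≠ q(k₀) and p(k) = q(k) for all k ≠ k₀). Then their bitwise encryptions p'(k) = E(p(k), w(k), w̃(k)) and q'(k) = E(q(k), w(k), w̃(k)) also differ in exactly the position k₀: p'(k₀) ≠ q'(k₀) and p'(k) = q'(k) for all k ≠ k₀. Hence changing one bit of the plain-image influences only the bit at the same location in the ciphertext. -/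
lemma E_one {p : ℕ} {wt : ℝ} (hp : p = 0 ∨ p = 1) (hwt : wt = 1 ∨ wt = -1) :
    E p 1 wt = p := by
  rcases hp with rfl | rfl <;> rcases hwt with rfl | rfl <;> norm_num [E, f, wbit]

lemma E_neg_one {p : ℕ} {wt : ℝ} (hp : p = 0 ∨ p = 1) (hwt : wt = 1 ∨ wt = -1) :
    E p (-1) wt = 1 - p := by
  rcases hp with rfl | rfl <;> rcases hwt with rfl | rfl <;> norm_num [E, f, wbit]

lemma E_injOn_bits {p q : ℕ} {w wt : ℝ} (hw : w = 1 ∨ w = -1) (hwt : wt = 1 ∨ wt = -1)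
    (hp : p = 0 ∨ p = 1) (hq : q = 0 ∨ q = 1) (h : E p w wt = E q w wt) : p = q := by
  rcases hw with rfl | rfl
  · rwa [E_one hp hwt, E_one hq hwt] at h
  · rw [E_neg_one hp hwt, E_neg_one hq hwt] at h
    omega

theorem stmt_11 (w wt : ℕ → ℝ)
    (hw : ∀ k, w k = 1 ∨ w k = -1) (hwt : ∀ k, wt k = 1 ∨ wt k = -1)
    (p q : ℕ → ℕ) (hp : ∀ k, p k = 0 ∨ p k = 1) (hq : ∀ k, q k = 0 ∨ q k = 1)
    (k₀ : ℕ) (hdiff : p k₀ ≠ q k₀) (hsame : ∀ k, k ≠ k₀ → p k = q k) :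
    E (p k₀) (w k₀) (wt k₀) ≠ E (q k₀) (w k₀) (wt k₀) ∧
    ∀ k, k ≠ k₀ → E (p k) (w k) (wt k) = E (q k) (w k) (wt k) :=
  ⟨fun h => hdiff (E_injOn_bits (hw k₀) (hwt k₀) (hp k₀) (hq k₀) h),
    fun k hk => by rw [hsame k hk]⟩
end
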